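/- Let H be a bialgebra over a field K and C a right H-comodule coalgebra. Then every finite subset F of C is contained in a finite-dimensional subspace D of C that is simultaneously a right H-subcomodule and a subcoalgebra of C. -/

import Mathlib

/-!
Slicing the comultiplication on either side, or the coaction, by a linear functional gives
endomorphisms of `C`. Over a field, a subspace `D` is a subcomodule as soon as it is stable under
all slices of `ρ`, and a subcoalgebra as soon as it is stable under all left and right slices of
`Δ`, because `D ⊗ C ∩ C ⊗ D = D ⊗ D`. So saturate `span F` successively under right slices of `Δ`,
left slices of `Δ` and slices of `ρ`. Each step keeps finite dimension, since all slices of the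
image of a finite-dimensional space lie in one finite-dimensional space. Stability survives the
later steps: slices of `Δ` (or of `ρ`) compose to slices by coassociativity, left and right slices
of `Δ` commute, and the comodule-coalgebra axiom rewrites a slice of `Δ` taken after a slice of
`ρ` as a sum of slices of `ρ` evaluated on the tensor components of `Δ`, which lie in the previous
stage.
-/

open TensorProduct LinearMap

/-- `D` is a subcoalgebra of the `K`-coalgebra `C`. -/
def IsSubcoalgebra {K C : Type*} [CommSemiring K] [AddCommMonoid C] [Module K C]
    [Coalgebra K C] (D : Submodule K C) : Prop :=
  ∀ x ∈ D, Coalgebra.comul (R := K) x ∈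
    LinearMap.range (TensorProduct.map D.subtype D.subtype)

namespace TensorProduct

section Slice

variable {R V W U X : Type*} [CommSemiring R]
  [AddCommMonoid V] [Module R V] [AddCommMonoid W] [Module R W]
  [AddCommMonoid U] [Module R U] [AddCommMonoid X] [Module R X]

def sliceRight (f : W →ₗ[R] R) : V ⊗[R] W →ₗ[R] V :=
  (TensorProduct.rid R V).toLinearMap ∘ₗ lTensor V f

def sliceLeft (f : V →ₗ[R] R) : V ⊗[R] W →ₗ[R] W :=
  (TensorProduct.lid R W).toLinearMap ∘ₗ rTensor W f

@[simp] theorem sliceRight_tmul (f : W →ₗ[R] R) (v : V) (w : W) :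
    sliceRight f (v ⊗ₜ w) = f w • v := by simp [sliceRight]

@[simp] theorem sliceLeft_tmul (f : V →ₗ[R] R) (v : V) (w : W) :
    sliceLeft f (v ⊗ₜ w) = f v • w := by simp [sliceLeft]

@[simp] theorem sliceRight_add (f g : W →ₗ[R] R) :
    sliceRight (f + g) = (sliceRight f + sliceRight g : V ⊗[R] W →ₗ[R] V) := by
  ext; simp [add_smul]

theorem sliceRight_comp_comm (f : V →ₗ[R] R) :
    sliceRight f ∘ₗ (TensorProduct.comm R V W).toLinearMap = sliceLeft f := by
  ext; simp

theorem sliceRight_comp_rTensor (f : W →ₗ[R] R) (g : V →ₗ[R] U) :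
    sliceRight f ∘ₗ rTensor W g = g ∘ₗ sliceRight f := by
  ext; simp

theorem sliceRight_comp_lTensor (f : W →ₗ[R] R) (g : X →ₗ[R] W) :
    sliceRight f ∘ₗ lTensor V g = sliceRight (V := V) (f ∘ₗ g) := by
  ext; simp

theorem sliceLeft_comp_lTensor (f : V →ₗ[R] R) (g : W →ₗ[R] U) :
    sliceLeft f ∘ₗ lTensor V g = g ∘ₗ sliceLeft f := by
  ext; simp

theorem sliceLeft_comp_rTensor (f : V →ₗ[R] R) (g : X →ₗ[R] V) :
    sliceLeft f ∘ₗ rTensor W g = sliceLeft (W := W) (f ∘ₗ g) := by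
  ext; simp

theorem sliceRight_comp_sliceRight (f : W →ₗ[R] R) (g : X →ₗ[R] R) :
    sliceRight f ∘ₗ sliceRight g =
      sliceRight (mul' R R ∘ₗ map f g) ∘ₗ (TensorProduct.assoc R V W X).toLinearMap := by
  ext; simp [smul_smul, mul_comm]

theorem sliceLeft_comp_sliceLeft (f : W →ₗ[R] R) (g : V →ₗ[R] R) :
    sliceLeft f ∘ₗ sliceLeft g ∘ₗ (TensorProduct.assoc R V W X).toLinearMap =
      sliceLeft (mul' R R ∘ₗ map g f) := by
  ext; simp [smul_smul]

theorem sliceLeft_comp_sliceRight (f : V →ₗ[R] R) (g : X →ₗ[R] R) :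
    sliceLeft f ∘ₗ sliceRight g =
      sliceRight g ∘ₗ sliceLeft (W := W ⊗[R] X) f ∘ₗ
        (TensorProduct.assoc R V W X).toLinearMap := by
  ext; simp [TensorProduct.smul_tmul', smul_smul, mul_comm]

end Slice

section AlgebraSlice

variable {R V W A : Type*} [CommSemiring R] [AddCommMonoid V] [Module R V]
  [AddCommMonoid W] [Module R W] [Semiring A] [Algebra R A]

theorem sliceRight_rTensor_sliceLeft_mulMap_tmul (e : V →ₗ[R] R) (φ : A →ₗ[R] R)
    (u : V ⊗[R] A) (v : W ⊗[R] A) :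
    sliceRight φ (rTensor A (sliceLeft e) (map LinearMap.id (mul' R A)
      (tensorTensorTensorComm R V A W A (u ⊗ₜ v)))) =
      sliceRight (φ ∘ₗ mul R A (sliceLeft e u)) v := by
  induction u using TensorProduct.induction_on with
  | zero => simp [sliceRight]
  | add u₁ u₂ h₁ h₂ =>
    simp only [add_tmul, map_add, h₁, h₂, comp_add, sliceRight_add, LinearMap.add_apply]
  | tmul x a =>
    induction v using TensorProduct.induction_on with
    | zero => simp [sliceRight]
    | add v₁ v₂ h₁ h₂ => simp only [tmul_add, map_add, h₁, h₂]
    | tmul y b => simp [smul_smul, mul_comm]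

theorem sliceRight_rTensor_sliceRight_mulMap_tmul (e : W →ₗ[R] R) (φ : A →ₗ[R] R)
    (u : V ⊗[R] A) (v : W ⊗[R] A) :
    sliceRight φ (rTensor A (sliceRight e) (map LinearMap.id (mul' R A)
      (tensorTensorTensorComm R V A W A (u ⊗ₜ v)))) =
      sliceRight (φ ∘ₗ (mul R A).flip (sliceLeft e v)) u := by
  induction v using TensorProduct.induction_on with
  | zero => simp [sliceRight]
  | add v₁ v₂ h₁ h₂ =>
    simp only [tmul_add, map_add, h₁, h₂, comp_add, sliceRight_add, LinearMap.add_apply]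
  | tmul y b =>
    induction u using TensorProduct.induction_on with
    | zero => simp [sliceRight]
    | add u₁ u₂ h₁ h₂ => simp only [add_tmul, map_add, h₁, h₂]
    | tmul x a => simp [smul_smul, mul_comm]

end AlgebraSlice

section Free

variable {R V W : Type*} [CommRing R] [AddCommGroup V] [Module R V] [AddCommGroup W] [Module R W]

theorem eq_zero_of_forall_sliceRight_eq_zero [Module.Free R W] {t : V ⊗[R] W}
    (h : ∀ f : W →ₗ[R] R, sliceRight f t = 0) : t = 0 := by
  classical
  let b := Module.Free.chooseBasis R W
  refine (equivFinsuppOfBasisRight b).injective (Finsupp.ext fun i => ?_)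
  simpa [equivFinsuppOfBasisRight_apply, sliceRight] using h (b.coord i)

theorem eq_zero_of_forall_sliceLeft_eq_zero [Module.Free R V] {t : V ⊗[R] W}
    (h : ∀ f : V →ₗ[R] R, sliceLeft f t = 0) : t = 0 := by
  classical
  let b := Module.Free.chooseBasis R V
  refine (equivFinsuppOfBasisLeft b).injective (Finsupp.ext fun i => ?_)
  simpa [equivFinsuppOfBasisLeft_apply, sliceLeft] using h (b.coord i)

theorem mem_range_rTensor_subtype_iff [Module.Free R W] (D : Submodule R V) {t : V ⊗[R] W} :
    t ∈ range (rTensor W D.subtype) ↔ ∀ f : W →ₗ[R] R, sliceRight f t ∈ D := by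
  have slice_mkQ (f : W →ₗ[R] R) : sliceRight f (rTensor W D.mkQ t) = D.mkQ (sliceRight f t) :=
    congr($(sliceRight_comp_rTensor f D.mkQ) t)
  rw [← rTensor_mkQ, mem_ker]
  refine ⟨fun h f => ?_, fun h => eq_zero_of_forall_sliceRight_eq_zero fun f => ?_⟩
  · rw [← Submodule.Quotient.mk_eq_zero, ← Submodule.mkQ_apply, ← slice_mkQ, h, map_zero]
  · simpa [slice_mkQ] using h f

theorem mem_range_lTensor_subtype_iff [Module.Free R V] (D : Submodule R W) {t : V ⊗[R] W} :
    t ∈ range (lTensor V D.subtype) ↔ ∀ f : V →ₗ[R] R, sliceLeft f t ∈ D := by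
  have slice_mkQ (f : V →ₗ[R] R) : sliceLeft f (lTensor V D.mkQ t) = D.mkQ (sliceLeft f t) :=
    congr($(sliceLeft_comp_lTensor f D.mkQ) t)
  rw [← lTensor_mkQ, mem_ker]
  refine ⟨fun h f => ?_, fun h => eq_zero_of_forall_sliceLeft_eq_zero fun f => ?_⟩
  · rw [← Submodule.Quotient.mk_eq_zero, ← Submodule.mkQ_apply, ← slice_mkQ, h, map_zero]
  · simpa [slice_mkQ] using h f

end Free

section Field

variable {K V W U : Type*} [Field K] [AddCommGroup V] [Module K V] [AddCommGroup W] [Module K W]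
  [AddCommGroup U] [Module K U]

theorem range_rTensor_inf_range_lTensor_le (D : Submodule K V) :
    range (rTensor V D.subtype) ⊓ range (lTensor V D.subtype) ≤
      range (map D.subtype D.subtype) := by
  obtain ⟨p, hp⟩ := D.subtype.exists_leftInverse_of_injective D.ker_subtype
  have fix : (D.subtype ∘ₗ p) ∘ₗ D.subtype = D.subtype := by rw [comp_assoc, hp, comp_id]
  rintro t ⟨⟨s₁, rfl⟩, s₂, hs₂⟩
  refine ⟨map p p (rTensor V D.subtype s₁), ?_⟩
  rw [← comp_apply (map _ _), ← map_comp, ← lTensor_comp_rTensor, comp_apply,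
    ← rTensor_comp_apply, fix, ← hs₂, ← lTensor_comp_apply, fix]

theorem finiteDimensional_iSup_map_sliceRight_comp (Φ : V →ₗ[K] W ⊗[K] U) (S : Submodule K V)
    [FiniteDimensional K S] :
    FiniteDimensional K ↥(⨆ f : U →ₗ[K] K, S.map (sliceRight f ∘ₗ Φ)) := by
  obtain ⟨G, hG⟩ := (Submodule.fg_iff_finiteDimensional S).2 inferInstance
  obtain ⟨J, hJ, hGJ⟩ :=
    Submodule.exists_fg_le_subset_range_rTensor_subtype (Φ '' G) (G.finite_toSet.image Φ)
  have : FiniteDimensional K J := (Submodule.fg_iff_finiteDimensional J).1 hJ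
  refine Submodule.finiteDimensional_of_le (iSup_le fun f => ?_ : _ ≤ J)
  rw [Submodule.map_comp, ← hG, Submodule.map_span, Submodule.map_span, Submodule.span_le]
  rintro _ ⟨_, ⟨g, hg, rfl⟩, rfl⟩
  obtain ⟨s, hs⟩ := hGJ ⟨g, hg, rfl⟩
  rw [← hs, ← comp_apply (sliceRight f), sliceRight_comp_rTensor]
  exact (sliceRight f s).2

theorem finiteDimensional_iSup_map_sliceLeft_comp (Φ : V →ₗ[K] W ⊗[K] U) (S : Submodule K V)
    [FiniteDimensional K S] :
    FiniteDimensional K ↥(⨆ f : W →ₗ[K] K, S.map (sliceLeft f ∘ₗ Φ)) := by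
  have h : ⨆ f : W →ₗ[K] K, S.map (sliceLeft f ∘ₗ Φ) =
      ⨆ f : W →ₗ[K] K, S.map (sliceRight f ∘ₗ (TensorProduct.comm K W U).toLinearMap ∘ₗ Φ) := by
    simp_rw [← comp_assoc, sliceRight_comp_comm]
  rw [h]
  exact finiteDimensional_iSup_map_sliceRight_comp _ S

end Field

end TensorProduct

namespace Submodule

variable {R M ι : Type*} [Semiring R] [AddCommMonoid M] [Module R M]
  {T : ι → M →ₗ[R] M} {A : M →ₗ[R] M}

theorem map_iSup_map_le_of_comp_eq (S : Submodule R M) (hA : ∀ j, ∃ k, A ∘ₗ T j = T k) :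
    (⨆ j, S.map (T j)).map A ≤ ⨆ j, S.map (T j) := by
  rw [map_iSup]
  refine iSup_mono' fun j => ?_
  obtain ⟨k, hk⟩ := hA j
  exact ⟨k, by rw [← map_comp, hk]⟩

theorem map_iSup_map_le_of_commute {S : Submodule R M} (hS : S.map A ≤ S)
    (hA : ∀ j, A ∘ₗ T j = T j ∘ₗ A) :
    (⨆ j, S.map (T j)).map A ≤ ⨆ j, S.map (T j) := by
  rw [map_iSup]
  refine iSup_mono fun j => ?_
  rw [← map_comp, hA, map_comp]
  exact map_mono hS

theorem le_iSup_map_of_eq_id (S : Submodule R M) {i : ι} (hT : T i = LinearMap.id) :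
    S ≤ ⨆ j, S.map (T j) :=
  le_iSup_of_le i (by rw [hT, map_id])

end Submodule

open Coalgebra WithConv

namespace Coaction

variable {R V A : Type*} [CommSemiring R] [AddCommMonoid V] [Module R V]
  [AddCommMonoid A] [Module R A] [CoalgebraStruct R A]

def IsCoassoc (ρ : V →ₗ[R] V ⊗[R] A) : Prop :=
  (TensorProduct.assoc R V A A).toLinearMap ∘ₗ rTensor A ρ ∘ₗ ρ = lTensor V comul ∘ₗ ρ

def IsCounital (ρ : V →ₗ[R] V ⊗[R] A) : Prop :=
  sliceRight counit ∘ₗ ρ = LinearMap.id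

def IsCompatibleWithComul {C H : Type*} [AddCommMonoid C] [Module R C] [CoalgebraStruct R C]
    [Semiring H] [Algebra R H] (ρ : C →ₗ[R] C ⊗[R] H) : Prop :=
  map LinearMap.id (mul' R H) ∘ₗ (tensorTensorTensorComm R C H C H).toLinearMap ∘ₗ map ρ ρ ∘ₗ
    comul = rTensor H comul ∘ₗ ρ

theorem IsCoassoc.sliceRight_comp_comp {ρ : V →ₗ[R] V ⊗[R] A} (hρ : IsCoassoc ρ)
    (φ ψ : A →ₗ[R] R) :
    (sliceRight φ ∘ₗ ρ) ∘ₗ (sliceRight ψ ∘ₗ ρ) = sliceRight (toConv φ * toConv ψ).ofConv ∘ₗ ρ := by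
  calc (sliceRight φ ∘ₗ ρ) ∘ₗ (sliceRight ψ ∘ₗ ρ)
      = sliceRight φ ∘ₗ (ρ ∘ₗ sliceRight ψ) ∘ₗ ρ := by simp only [comp_assoc]
    _ = (sliceRight φ ∘ₗ sliceRight ψ) ∘ₗ rTensor A ρ ∘ₗ ρ := by
        rw [← sliceRight_comp_rTensor]; simp only [comp_assoc]
    _ = sliceRight (mul' R R ∘ₗ map φ ψ) ∘ₗ lTensor V comul ∘ₗ ρ := by
        rw [sliceRight_comp_sliceRight, comp_assoc, ← hρ]
    _ = sliceRight (toConv φ * toConv ψ).ofConv ∘ₗ ρ := by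
        rw [← comp_assoc, sliceRight_comp_lTensor, comp_assoc]; rfl

end Coaction

namespace Coalgebra

variable {R A : Type*} [CommSemiring R] [AddCommMonoid A] [Module R A] [Coalgebra R A]

theorem isCoassoc_comul : Coaction.IsCoassoc (comul : A →ₗ[R] A ⊗[R] A) := coassoc

theorem sliceRight_counit_comp_comul :
    sliceRight counit ∘ₗ (comul : A →ₗ[R] A ⊗[R] A) = LinearMap.id := by
  rw [sliceRight, comp_assoc, lTensor_counit_comp_comul]
  ext; simp

theorem sliceLeft_counit_comp_comul :
    sliceLeft counit ∘ₗ (comul : A →ₗ[R] A ⊗[R] A) = LinearMap.id := by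
  rw [sliceLeft, comp_assoc, rTensor_counit_comp_comul]
  ext; simp

theorem sliceLeft_comp_comul_comp (f g : A →ₗ[R] R) :
    (sliceLeft f ∘ₗ comul) ∘ₗ (sliceLeft g ∘ₗ comul) =
      sliceLeft (toConv g * toConv f).ofConv ∘ₗ (comul : A →ₗ[R] A ⊗[R] A) := by
  calc (sliceLeft f ∘ₗ comul) ∘ₗ (sliceLeft g ∘ₗ comul)
      = sliceLeft f ∘ₗ (comul ∘ₗ sliceLeft g) ∘ₗ (comul : A →ₗ[R] A ⊗[R] A) := by
        simp only [comp_assoc]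
    _ = sliceLeft f ∘ₗ sliceLeft g ∘ₗ lTensor A comul ∘ₗ (comul : A →ₗ[R] A ⊗[R] A) := by
        rw [← sliceLeft_comp_lTensor]; simp only [comp_assoc]
    _ = sliceLeft (mul' R R ∘ₗ map g f) ∘ₗ rTensor A comul ∘ₗ (comul : A →ₗ[R] A ⊗[R] A) := by
        rw [← coassoc, ← sliceLeft_comp_sliceLeft]; simp only [comp_assoc]
    _ = sliceLeft (toConv g * toConv f).ofConv ∘ₗ (comul : A →ₗ[R] A ⊗[R] A) := by
        rw [← comp_assoc, sliceLeft_comp_rTensor, comp_assoc]; rfl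

theorem sliceLeft_comp_comul_commute (f g : A →ₗ[R] R) :
    (sliceLeft f ∘ₗ comul) ∘ₗ (sliceRight g ∘ₗ comul) =
      (sliceRight g ∘ₗ comul) ∘ₗ (sliceLeft f ∘ₗ (comul : A →ₗ[R] A ⊗[R] A)) := by
  calc (sliceLeft f ∘ₗ comul) ∘ₗ (sliceRight g ∘ₗ comul)
      = sliceLeft f ∘ₗ (comul ∘ₗ sliceRight g) ∘ₗ (comul : A →ₗ[R] A ⊗[R] A) := by
        simp only [comp_assoc]
    _ = (sliceLeft f ∘ₗ sliceRight g) ∘ₗ rTensor A comul ∘ₗ (comul : A →ₗ[R] A ⊗[R] A) := by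
        rw [← sliceRight_comp_rTensor]; simp only [comp_assoc]
    _ = sliceRight g ∘ₗ (sliceLeft f ∘ₗ lTensor A comul) ∘ₗ (comul : A →ₗ[R] A ⊗[R] A) := by
        rw [sliceLeft_comp_sliceRight]; simp only [comp_assoc, coassoc]
    _ = (sliceRight g ∘ₗ comul) ∘ₗ (sliceLeft f ∘ₗ (comul : A →ₗ[R] A ⊗[R] A)) := by
        rw [sliceLeft_comp_lTensor]; simp only [comp_assoc]

end Coalgebra

namespace Coaction

variable {R C H : Type*} [CommRing R] [AddCommGroup C] [Module R C] [Coalgebra R C]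
  [Module.Free R C] [Semiring H] [Algebra R H] {ρ : C →ₗ[R] C ⊗[R] H}

theorem IsCompatibleWithComul.map_sliceLeft_comp_comul_iSup_le (hρ : IsCompatibleWithComul ρ)
    {S : Submodule R C} (hS : ∀ f : C →ₗ[R] R, S.map (sliceLeft f ∘ₗ comul) ≤ S)
    (e : C →ₗ[R] R) :
    (⨆ φ : H →ₗ[R] R, S.map (sliceRight φ ∘ₗ ρ)).map (sliceLeft e ∘ₗ comul) ≤
      ⨆ φ : H →ₗ[R] R, S.map (sliceRight φ ∘ₗ ρ) := by
  rw [Submodule.map_iSup]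
  refine iSup_le fun φ => ?_
  -- `Θ (a ⊗ b)` is the slice of `ρ b` by `h ↦ φ (x * h)`, where `x = Σ e(a₀) a₁`.
  let Θ : C ⊗[R] C →ₗ[R] C := sliceRight φ ∘ₗ rTensor H (sliceLeft e) ∘ₗ
    map LinearMap.id (mul' R H) ∘ₗ (tensorTensorTensorComm R C H C H).toLinearMap ∘ₗ map ρ ρ
  have key : (sliceLeft e ∘ₗ comul) ∘ₗ (sliceRight φ ∘ₗ ρ) = Θ ∘ₗ comul := by
    calc (sliceLeft e ∘ₗ comul) ∘ₗ (sliceRight φ ∘ₗ ρ)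
        = sliceRight φ ∘ₗ rTensor H (sliceLeft e) ∘ₗ rTensor H comul ∘ₗ ρ := by
          rw [← comp_assoc, ← sliceRight_comp_rTensor, rTensor_comp]; simp only [comp_assoc]
      _ = Θ ∘ₗ comul := by rw [← hρ]; simp only [Θ, comp_assoc]
  rw [← Submodule.map_comp, key, Submodule.map_le_iff_le_comap]
  intro y hy
  obtain ⟨u, hu⟩ : comul y ∈ range (lTensor C S.subtype) :=
    (mem_range_lTensor_subtype_iff S).2 fun f => hS f ⟨y, hy, rfl⟩
  rw [Submodule.mem_comap, comp_apply, ← hu]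
  clear hu
  induction u using TensorProduct.induction_on with
  | zero => simp
  | add u₁ u₂ h₁ h₂ => rw [map_add, map_add]; exact add_mem h₁ h₂
  | tmul a b =>
    refine Submodule.mem_iSup_of_mem (φ ∘ₗ mul R H (sliceLeft e (ρ a))) ⟨b, b.2, ?_⟩
    simp only [Θ, comp_apply, lTensor_tmul, map_tmul, LinearEquiv.coe_coe,
      sliceRight_rTensor_sliceLeft_mulMap_tmul]
    rfl

theorem IsCompatibleWithComul.map_sliceRight_comp_comul_iSup_le (hρ : IsCompatibleWithComul ρ)
    {S : Submodule R C} (hS : ∀ f : C →ₗ[R] R, S.map (sliceRight f ∘ₗ comul) ≤ S)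
    (e : C →ₗ[R] R) :
    (⨆ φ : H →ₗ[R] R, S.map (sliceRight φ ∘ₗ ρ)).map (sliceRight e ∘ₗ comul) ≤
      ⨆ φ : H →ₗ[R] R, S.map (sliceRight φ ∘ₗ ρ) := by
  rw [Submodule.map_iSup]
  refine iSup_le fun φ => ?_
  let Θ : C ⊗[R] C →ₗ[R] C := sliceRight φ ∘ₗ rTensor H (sliceRight e) ∘ₗ
    map LinearMap.id (mul' R H) ∘ₗ (tensorTensorTensorComm R C H C H).toLinearMap ∘ₗ map ρ ρ
  have key : (sliceRight e ∘ₗ comul) ∘ₗ (sliceRight φ ∘ₗ ρ) = Θ ∘ₗ comul := by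
    calc (sliceRight e ∘ₗ comul) ∘ₗ (sliceRight φ ∘ₗ ρ)
        = sliceRight φ ∘ₗ rTensor H (sliceRight e) ∘ₗ rTensor H comul ∘ₗ ρ := by
          rw [← comp_assoc, ← sliceRight_comp_rTensor, rTensor_comp]; simp only [comp_assoc]
      _ = Θ ∘ₗ comul := by rw [← hρ]; simp only [Θ, comp_assoc]
  rw [← Submodule.map_comp, key, Submodule.map_le_iff_le_comap]
  intro y hy
  obtain ⟨u, hu⟩ : comul y ∈ range (rTensor C S.subtype) :=
    (mem_range_rTensor_subtype_iff S).2 fun f => hS f ⟨y, hy, rfl⟩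
  rw [Submodule.mem_comap, comp_apply, ← hu]
  clear hu
  induction u using TensorProduct.induction_on with
  | zero => simp
  | add u₁ u₂ h₁ h₂ => rw [map_add, map_add]; exact add_mem h₁ h₂
  | tmul a b =>
    refine Submodule.mem_iSup_of_mem (φ ∘ₗ (mul R H).flip (sliceLeft e (ρ b))) ⟨a, a.2, ?_⟩
    simp only [Θ, comp_apply, rTensor_tmul, map_tmul, LinearEquiv.coe_coe,
      sliceRight_rTensor_sliceRight_mulMap_tmul]
    rfl

end Coaction

theorem isSubcoalgebra_of_forall_map_le {K C : Type*} [Field K] [AddCommGroup C] [Module K C]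
    [Coalgebra K C] {D : Submodule K C}
    (hL : ∀ f : C →ₗ[K] K, D.map (sliceLeft f ∘ₗ comul) ≤ D)
    (hR : ∀ f : C →ₗ[K] K, D.map (sliceRight f ∘ₗ comul) ≤ D) : IsSubcoalgebra D := fun x hx =>
  range_rTensor_inf_range_lTensor_le D
    ⟨(mem_range_rTensor_subtype_iff D).2 fun f => hR f ⟨x, hx, rfl⟩,
      (mem_range_lTensor_subtype_iff D).2 fun f => hL f ⟨x, hx, rfl⟩⟩

theorem finiteness_comodule_coalgebras
    (K : Type*) [Field K] (H : Type*) [Ring H] [Bialgebra K H]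
    (C : Type*) [AddCommGroup C] [Module K C] [Coalgebra K C]
    (ρ : C →ₗ[K] C ⊗[K] H)
    -- comodule coassociativity: (ρ ⊗ 1) ∘ ρ = (1 ⊗ Δ_H) ∘ ρ
    (hcoassoc : ∀ c : C, (TensorProduct.assoc K C H H)
        ((LinearMap.rTensor H ρ) (ρ c)) =
        (LinearMap.lTensor C (Coalgebra.comul (R := K))) (ρ c))
    -- comodule counit axiom: (1 ⊗ ε_H) ∘ ρ = id
    (hcounit : ∀ c : C,
        (TensorProduct.rid K C) ((LinearMap.lTensor C (Coalgebra.counit (R := K))) (ρ c)) = c)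
    -- comodule-coalgebra axiom:
    -- Σ (c₍₁₎)₀ ⊗ (c₍₂₎)₀ ⊗ (c₍₁₎)₁(c₍₂₎)₁ = Σ (c₀)₍₁₎ ⊗ (c₀)₍₂₎ ⊗ c₁
    (hcompat : ∀ c : C,
        (TensorProduct.map LinearMap.id (LinearMap.mul' K H))
          ((TensorProduct.tensorTensorTensorComm K C H C H)
            ((TensorProduct.map ρ ρ) (Coalgebra.comul (R := K) c))) =
        (LinearMap.rTensor H (Coalgebra.comul (R := K))) (ρ c))
    (F : Set C) (hF : F.Finite) :
    ∃ D : Submodule K C, F ⊆ D ∧ FiniteDimensional K D ∧ IsSubcoalgebra D ∧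
      (∀ x ∈ D, ρ x ∈ LinearMap.range (LinearMap.rTensor H D.subtype)) := by
  have hρ : Coaction.IsCoassoc ρ := LinearMap.ext hcoassoc
  have hε : Coaction.IsCounital ρ := LinearMap.ext hcounit
  have hΔ : Coaction.IsCompatibleWithComul ρ := LinearMap.ext hcompat
  let S₀ := Submodule.span K F
  let S₁ := ⨆ g : C →ₗ[K] K, S₀.map (sliceRight g ∘ₗ comul)
  let S₂ := ⨆ f : C →ₗ[K] K, S₁.map (sliceLeft f ∘ₗ comul)
  let D := ⨆ φ : H →ₗ[K] K, S₂.map (sliceRight φ ∘ₗ ρ)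
  have hS₁R (g : C →ₗ[K] K) : S₁.map (sliceRight g ∘ₗ comul) ≤ S₁ :=
    S₀.map_iSup_map_le_of_comp_eq fun h => ⟨_, isCoassoc_comul.sliceRight_comp_comp g h⟩
  have hS₂L (f : C →ₗ[K] K) : S₂.map (sliceLeft f ∘ₗ comul) ≤ S₂ :=
    S₁.map_iSup_map_le_of_comp_eq fun g => ⟨_, sliceLeft_comp_comul_comp f g⟩
  have hS₂R (g : C →ₗ[K] K) : S₂.map (sliceRight g ∘ₗ comul) ≤ S₂ :=
    Submodule.map_iSup_map_le_of_commute (hS₁R g) fun f => (sliceLeft_comp_comul_commute f g).symm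
  have hD (φ : H →ₗ[K] K) : D.map (sliceRight φ ∘ₗ ρ) ≤ D :=
    S₂.map_iSup_map_le_of_comp_eq fun ψ => ⟨_, hρ.sliceRight_comp_comp φ ψ⟩
  have hS₀₁ : S₀ ≤ S₁ := S₀.le_iSup_map_of_eq_id sliceRight_counit_comp_comul
  have hS₁₂ : S₁ ≤ S₂ := S₁.le_iSup_map_of_eq_id sliceLeft_counit_comp_comul
  have hS₂D : S₂ ≤ D := S₂.le_iSup_map_of_eq_id hε
  have : FiniteDimensional K S₀ := FiniteDimensional.span_of_finite K hF
  have : FiniteDimensional K S₁ := finiteDimensional_iSup_map_sliceRight_comp comul S₀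
  have : FiniteDimensional K S₂ := finiteDimensional_iSup_map_sliceLeft_comp comul S₁
  refine ⟨D, fun x hx => hS₂D (hS₁₂ (hS₀₁ (Submodule.subset_span hx))),
    finiteDimensional_iSup_map_sliceRight_comp ρ S₂,
    isSubcoalgebra_of_forall_map_le (hΔ.map_sliceLeft_comp_comul_iSup_le hS₂L)
      (hΔ.map_sliceRight_comp_comul_iSup_le hS₂R),
    fun x hx => (mem_range_rTensor_subtype_iff D).2 fun φ => hD φ ⟨x, hx, rfl⟩⟩
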